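/- arXiv:2103.13995 — 2 statements merged into one kernel-verified Lean document; each statement's English description precedes it below -/
import Mathlib

section
/- Let n ≥ 2 and let Q(x) = Σ_{1 ≤ i ≤ j ≤ n} c_{ij} x_i x_j be a primitive, positive definite quadratic form with integer coefficients and Gram matrix A. Then there exist infinitely many odd primes p such that the congruence Q(x) ≡ p (mod 2^7 (det A)^3) is solvable over ℤ: for every real X there exist an odd prime p > X and x ∈ ℤ^n with Q(x) ≡ p (mod 2^7 (det A)^3). -/
/-- The integral quadratic form `Q(x) = ∑_{1 ≤ i ≤ j ≤ n} c_{ij} x_i x_j`. -/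
def quadForm (n : ℕ) (c : Fin n → Fin n → ℤ) (x : Fin n → ℤ) : ℤ :=
  ∑ i : Fin n, ∑ j ∈ Finset.univ.filter (fun j => i ≤ j), c i j * x i * x j

/-- `Q` is primitive: the gcd of all coefficients `c_{ij}` (for `i ≤ j`) is `1`,
i.e. any common divisor of the coefficients is a unit. -/
def quadFormPrimitive (n : ℕ) (c : Fin n → Fin n → ℤ) : Prop :=
  ∀ d : ℤ, (∀ i j : Fin n, i ≤ j → d ∣ c i j) → IsUnit d

/-- The Gram matrix of `Q`: `A_{ii} = 2 c_{ii}`, and `A_{ij} = A_{ji} = c_{ij}` for `i < j`. -/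
def gramMatrix (n : ℕ) (c : Fin n → Fin n → ℤ) : Matrix (Fin n) (Fin n) ℤ :=
  Matrix.of fun i j => if i = j then 2 * c i i else if i < j then c i j else c j i

lemma gram_dot (n : ℕ) (c : Fin n → Fin n → ℤ) (v : Fin n → ℤ) :
    dotProduct v ((gramMatrix n c).mulVec v) = 2 * quadForm n c v := by
  classical
  have hA : ∀ i j : Fin n, gramMatrix n c i j = gramMatrix n c j i := by
    intro i j
    simp only [gramMatrix, Matrix.of_apply]
    rcases lt_trichotomy i j with h | h | h
    · rw [if_neg h.ne, if_pos h, if_neg h.ne', if_neg (not_lt.mpr h.le)]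
    · simp [h]
    · rw [if_neg h.ne', if_neg (not_lt.mpr h.le), if_neg h.ne, if_pos h]
  set F : Fin n → Fin n → ℤ := fun i j => v i * (gramMatrix n c i j * v j) with hF
  have hdot : dotProduct v ((gramMatrix n c).mulVec v) = ∑ i : Fin n, ∑ j : Fin n, F i j := by
    simp [dotProduct, Matrix.mulVec, Finset.mul_sum, hF]
  rw [hdot]
  have hsplit : ∀ i : Fin n, (∑ j : Fin n, F i j) =
      (∑ j ∈ Finset.univ.filter (fun j => i ≤ j), F i j)
      + (∑ j ∈ Finset.univ.filter (fun j => j < i), F i j) := by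
    intro i
    rw [← Finset.sum_filter_add_sum_filter_not Finset.univ (fun j => i ≤ j)]
    congr 1
    apply Finset.sum_congr _ (fun _ _ => rfl)
    congr 1
    ext j
    simp [not_le]
  rw [Finset.sum_congr rfl (fun i _ => hsplit i), Finset.sum_add_distrib]
  have hswap : (∑ i : Fin n, ∑ j ∈ Finset.univ.filter (fun j => j < i), F i j)
      = ∑ i : Fin n, ∑ j ∈ Finset.univ.filter (fun j => i < j), F i j := by
    simp only [Finset.sum_filter]
    rw [Finset.sum_comm]
    refine Finset.sum_congr rfl fun i _ => Finset.sum_congr rfl fun j _ => ?_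
    by_cases h : i < j
    · rw [if_pos h, if_pos h, hF]
      simp only []
      rw [hA j i]
      ring
    · rw [if_neg h, if_neg h]
  rw [hswap]
  have hfe : ∀ i : Fin n, Finset.univ.filter (fun j => i ≤ j)
      = insert i (Finset.univ.filter (fun j => i < j)) := by
    intro i
    ext j
    simp only [Finset.mem_filter, Finset.mem_univ, true_and, Finset.mem_insert]
    constructor
    · intro h
      rcases h.lt_or_eq with h' | h'
      · exact Or.inr h'
      · exact Or.inl h'.symm
    · rintro (h | h)
      · exact h.ge
      · exact h.le
  have hnotmem : ∀ i : Fin n, i ∉ Finset.univ.filter (fun j => i < j) := by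
    intro i; simp
  have key : ∀ i : Fin n,
      (∑ j ∈ Finset.univ.filter (fun j => i ≤ j), F i j)
      + (∑ j ∈ Finset.univ.filter (fun j => i < j), F i j)
      = 2 * ∑ j ∈ Finset.univ.filter (fun j => i ≤ j), c i j * v i * v j := by
    intro i
    rw [hfe i, Finset.sum_insert (hnotmem i), Finset.sum_insert (hnotmem i)]
    have hS : (∑ j ∈ Finset.univ.filter (fun j => i < j), F i j)
        = ∑ j ∈ Finset.univ.filter (fun j => i < j), c i j * v i * v j := by
      refine Finset.sum_congr rfl fun j hj => ?_
      have hij : i < j := by simpa using hj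
      simp only [hF, gramMatrix, Matrix.of_apply, if_neg hij.ne, if_pos hij]
      ring
    rw [hS]
    have hFii : F i i = 2 * (c i i * v i * v i) := by
      simp [hF, gramMatrix]
      ring
    rw [hFii]
    ring
  rw [← Finset.sum_add_distrib, Finset.sum_congr rfl (fun i _ => key i)]
  unfold quadForm
  rw [Finset.mul_sum]

lemma gram_det_ne_zero (n : ℕ) (c : Fin n → Fin n → ℤ)
    (hposdef : ∀ x : Fin n → ℤ, x ≠ 0 → 0 < quadForm n c x) :
    (gramMatrix n c).det ≠ 0 := by
  intro hdet
  obtain ⟨v, hv, hmv⟩ := (Matrix.exists_mulVec_eq_zero_iff).mpr hdet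
  have h0 : dotProduct v ((gramMatrix n c).mulVec v) = 0 := by
    rw [hmv]; simp [dotProduct]
  rw [gram_dot] at h0
  have := hposdef v hv
  omega

lemma quadForm_single (n : ℕ) (c : Fin n → Fin n → ℤ) (k : Fin n) :
    quadForm n c (Pi.single k 1) = c k k := by
  classical
  unfold quadForm
  rw [Finset.sum_eq_single k]
  · rw [Finset.sum_eq_single_of_mem k (by simp)]
    · simp
    · intro b _ hb
      simp [Pi.single_eq_of_ne hb]
  · intro a _ ha
    exact Finset.sum_eq_zero fun b _ => by simp [Pi.single_eq_of_ne ha]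
  · simp

lemma quadForm_pair (n : ℕ) (c : Fin n → Fin n → ℤ) (i j : Fin n) (hij : i < j) :
    quadForm n c (Pi.single i 1 + Pi.single j 1) = c i i + c i j + c j j := by
  classical
  unfold quadForm
  have hne : i ≠ j := hij.ne
  have hx : ∀ a : Fin n, a ≠ i → a ≠ j → (Pi.single i 1 + Pi.single j 1 : Fin n → ℤ) a = 0 := by
    intro a hai haj
    simp [Pi.single_eq_of_ne hai, Pi.single_eq_of_ne haj]
  have hxi : (Pi.single i 1 + Pi.single j 1 : Fin n → ℤ) i = 1 := by
    simp [Pi.single_eq_of_ne hne]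
  have hxj : (Pi.single i 1 + Pi.single j 1 : Fin n → ℤ) j = 1 := by
    simp [Pi.single_eq_of_ne (Ne.symm hne)]
  rw [Finset.sum_eq_add_of_mem i j (Finset.mem_univ i) (Finset.mem_univ j) hne]
  · rw [Finset.sum_eq_add_of_mem i j (by simp) (by simpa using hij.le) hne]
    · rw [Finset.sum_eq_single_of_mem j (by simp)]
      · rw [hxi, hxj]; ring
      · intro b hb hbj
        rcases eq_or_ne b i with rfl | hbi
        · exact absurd (by simpa using hb) (not_le.mpr hij)
        · simp [hx b hbi hbj]
    · intro b _ hb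
      simp [hx b hb.1 hb.2]
  · intro a _ ha
    exact Finset.sum_eq_zero fun b _ => by simp [hx a ha.1 ha.2]

lemma exists_not_dvd (n : ℕ) (c : Fin n → Fin n → ℤ) (hprim : quadFormPrimitive n c)
    (q : ℕ) (hq : q.Prime) : ∃ x : Fin n → ℤ, ¬ ((q : ℤ) ∣ quadForm n c x) := by
  by_contra h
  push_neg at h
  have hd : ∀ i j : Fin n, i ≤ j → (q : ℤ) ∣ c i j := by
    intro i j hij
    rcases eq_or_lt_of_le hij with rfl | hlt
    · simpa [quadForm_single] using h (Pi.single i 1)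
    · have h1 : (q : ℤ) ∣ c i i := by simpa [quadForm_single] using h (Pi.single i 1)
      have h2 : (q : ℤ) ∣ c j j := by simpa [quadForm_single] using h (Pi.single j 1)
      have h3 : (q : ℤ) ∣ c i i + c i j + c j j := by
        have h4 := h (Pi.single i 1 + Pi.single j 1)
        rwa [quadForm_pair n c i j hlt] at h4
      obtain ⟨a, ha⟩ := h1
      obtain ⟨b, hb⟩ := h2
      obtain ⟨e, he⟩ := h3
      exact ⟨e - a - b, by rw [mul_sub, mul_sub, ← ha, ← hb, ← he]; ring⟩
  exact (Int.prime_iff_natAbs_prime.mpr (by simpa using hq)).not_unit (hprim _ hd)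

lemma quadForm_congr (n : ℕ) (c : Fin n → Fin n → ℤ) (m : ℕ) (x y : Fin n → ℤ)
    (h : ∀ i, ((x i : ZMod m)) = ((y i : ZMod m))) :
    ((quadForm n c x : ZMod m)) = ((quadForm n c y : ZMod m)) := by
  unfold quadForm
  push_cast
  simp only [h]

lemma exists_coprime_all (n : ℕ) (c : Fin n → Fin n → ℤ) (hprim : quadFormPrimitive n c) :
    ∀ s : Finset ℕ, (∀ q ∈ s, q.Prime) →
      ∃ x : Fin n → ℤ, ∀ q ∈ s, ¬ ((q : ℤ) ∣ quadForm n c x) := by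
  classical
  intro s
  induction s using Finset.induction_on with
  | empty => exact fun _ => ⟨0, by simp⟩
  | @insert q s hqs ih =>
    intro hs
    have hq : q.Prime := hs q (Finset.mem_insert_self q s)
    obtain ⟨x₁, hx₁⟩ := ih (fun r hr => hs r (Finset.mem_insert_of_mem hr))
    obtain ⟨x₂, hx₂⟩ := exists_not_dvd n c hprim q hq
    set m : ℕ := ∏ r ∈ s, r with hm
    have hcopN : Nat.Coprime q m := by
      refine Nat.Coprime.prod_right fun r hr => ?_
      exact (Nat.coprime_primes hq (hs r (Finset.mem_insert_of_mem hr))).mpr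
        (by rintro rfl; exact hqs hr)
    have hcop : IsCoprime (m : ℤ) (q : ℤ) := Nat.isCoprime_iff_coprime.mpr hcopN.symm
    obtain ⟨u, v, huv⟩ := hcop
    refine ⟨fun i => x₂ i * (u * m) + x₁ i * (v * q), ?_⟩
    intro r hr
    rcases Finset.mem_insert.mp hr with rfl | hrs
    · -- modulus q : congruent to x₂
      have hcongr : ∀ i, (((x₂ i * (u * m) + x₁ i * (v * r) : ℤ) : ZMod r)) = ((x₂ i : ZMod r)) := by
        intro i
        rw [ZMod.intCast_eq_intCast_iff]
        refine Int.modEq_iff_dvd.mpr ?_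
        have h1 : u * (m : ℤ) = 1 - v * r := by linarith [huv]
        rw [show x₂ i - (x₂ i * (u * (m : ℤ)) + x₁ i * (v * r)) = (-((x₁ i - x₂ i) * v)) * r by rw [h1]; ring]
        exact Dvd.dvd.mul_left dvd_rfl _
      intro hdvd
      apply hx₂
      have h0 : ((quadForm n c (fun i => x₂ i * (u * m) + x₁ i * (v * r)) : ℤ) : ZMod r) = 0 :=
        (ZMod.intCast_zmod_eq_zero_iff_dvd _ _).mpr hdvd
      have := quadForm_congr n c r _ x₂ hcongr
      rw [h0] at this
      exact (ZMod.intCast_zmod_eq_zero_iff_dvd _ _).mp this.symm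
    · -- modulus r ∈ s : congruent to x₁
      have hrm : (r : ℤ) ∣ (m : ℤ) := Int.natCast_dvd_natCast.mpr (Finset.dvd_prod_of_mem _ hrs)
      have hcongr : ∀ i, (((x₂ i * (u * m) + x₁ i * (v * q) : ℤ) : ZMod r)) = ((x₁ i : ZMod r)) := by
        intro i
        rw [ZMod.intCast_eq_intCast_iff]
        refine (Int.modEq_iff_dvd.mpr ?_)
        have h1 : v * (q : ℤ) = 1 - u * m := by linarith [huv]
        rw [show x₁ i - (x₂ i * (u * m) + x₁ i * (v * q)) = ((x₁ i - x₂ i) * u) * m by rw [h1]; ring]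
        exact Dvd.dvd.mul_left hrm _
      intro hdvd
      apply hx₁ r hrs
      have h0 : ((quadForm n c (fun i => x₂ i * (u * m) + x₁ i * (v * q)) : ℤ) : ZMod r) = 0 :=
        (ZMod.intCast_zmod_eq_zero_iff_dvd _ _).mpr hdvd
      have := quadForm_congr n c r _ x₁ hcongr
      rw [h0] at this
      exact (ZMod.intCast_zmod_eq_zero_iff_dvd _ _).mp this.symm

lemma exists_coprime (n : ℕ) (c : Fin n → Fin n → ℤ) (hprim : quadFormPrimitive n c)
    (N : ℕ) (hN : N ≠ 0) :
    ∃ x : Fin n → ℤ, Nat.Coprime (quadForm n c x).natAbs N := by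
  obtain ⟨x, hx⟩ := exists_coprime_all n c hprim N.primeFactors
    (fun q hq => Nat.prime_of_mem_primeFactors hq)
  refine ⟨x, ?_⟩
  by_contra hg
  obtain ⟨p, hp, hpdvd⟩ := Nat.exists_prime_and_dvd hg
  have hpN : p ∣ N := hpdvd.trans (Nat.gcd_dvd_right _ _)
  have hpa : p ∣ (quadForm n c x).natAbs := hpdvd.trans (Nat.gcd_dvd_left _ _)
  exact hx p (Nat.mem_primeFactors.mpr ⟨hp, hpN, hN⟩)
    (Int.dvd_natAbs.mp (Int.natCast_dvd_natCast.mpr hpa))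

/-- For a primitive, positive definite integral quadratic form `Q` in `n ≥ 2` variables
with Gram matrix `A`, there are infinitely many odd primes `p` such that the congruence
`Q(x) ≡ p (mod 2⁷ (det A)³)` is solvable over `ℤ`. -/
theorem congruence_quadForm_prime_solvable
    (n : ℕ) (hn : 2 ≤ n) (c : Fin n → Fin n → ℤ)
    (hprim : quadFormPrimitive n c)
    (hposdef : ∀ x : Fin n → ℤ, x ≠ 0 → 0 < quadForm n c x) :
    ∀ X : ℝ, ∃ p : ℕ, p.Prime ∧ Odd p ∧ X < (p : ℝ) ∧
      ∃ x : Fin n → ℤ,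
        quadForm n c x ≡ (p : ℤ) [ZMOD (2 ^ 7 * (gramMatrix n c).det ^ 3)] := by
  intro X
  set M : ℤ := 2 ^ 7 * (gramMatrix n c).det ^ 3 with hM
  have hD : (gramMatrix n c).det ≠ 0 := gram_det_ne_zero n c hposdef
  have hMne : M ≠ 0 := by
    simp only [hM]
    positivity
  set N : ℕ := M.natAbs with hN
  have hNne : N ≠ 0 := Int.natAbs_ne_zero.mpr hMne
  haveI : NeZero N := ⟨hNne⟩
  obtain ⟨x₀, hx₀⟩ := exists_coprime n c hprim N hNne
  have hunit : IsUnit ((quadForm n c x₀ : ℤ) : ZMod N) := by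
    rcases Int.natAbs_eq (quadForm n c x₀) with h | h
    · rw [h, Int.cast_natCast]
      exact (ZMod.isUnit_iff_coprime _ _).mpr hx₀
    · rw [h, Int.cast_neg, Int.cast_natCast]
      exact ((ZMod.isUnit_iff_coprime _ _).mpr hx₀).neg
  obtain ⟨p, hpgt, hp, hpa⟩ := Nat.forall_exists_prime_gt_and_eq_mod hunit ⌈X⌉₊
  have hpcop : Nat.Coprime p N := by
    rw [← ZMod.isUnit_iff_coprime]
    rw [hpa]
    exact hunit
  have h2N : 2 ∣ N := by
    have h2M : (2 : ℤ) ∣ M := ⟨2 ^ 6 * (gramMatrix n c).det ^ 3, by rw [hM]; ring⟩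
    have := Int.natAbs_dvd_natAbs.mpr h2M
    simpa using this
  have hpodd : Odd p := by
    refine hp.odd_of_ne_two ?_
    rintro rfl
    have h21 : (2 : ℕ) ∣ Nat.gcd 2 N := Nat.dvd_gcd dvd_rfl h2N
    rw [hpcop] at h21
    omega
  refine ⟨p, hp, hpodd, ?_, x₀, ?_⟩
  · calc X ≤ (⌈X⌉₊ : ℝ) := Nat.le_ceil X
      _ < (p : ℝ) := by exact_mod_cast hpgt
  · have : ((quadForm n c x₀ : ℤ) : ZMod N) = (((p : ℤ)) : ZMod N) := by
      rw [hpa.symm]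
      push_cast
      rfl
    have hmod : quadForm n c x₀ ≡ (p : ℤ) [ZMOD (N : ℤ)] :=
      (ZMod.intCast_eq_intCast_iff _ _ _).mp this
    have hdvd : ((N : ℤ)) ∣ ((p : ℤ) - quadForm n c x₀) := Int.modEq_iff_dvd.mp hmod
    exact Int.modEq_iff_dvd.mpr (Int.natAbs_dvd.mp (by rw [← hN]; exact hdvd))
end

section
/- Let p be an odd prime, g ≥ 1, and let μ = (μ_1, …, μ_g), r = (r_1, …, r_g) ∈ ℤ^g. Suppose that μ_i² ≡ r_i² (mod 4p) for every 1 ≤ i ≤ g and μ_i μ_j ≡ r_i r_j (mod 2p) for all 1 ≤ i ≠ j ≤ g (equivalently, the half-integral matrix μμ^t − rr^t lies in 4p times the set of half-integral matrices). Then either r_i ≡ μ_i (mod 2p) for all i, or r_i ≡ −μ_i (mod 2p) for all i. -/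
private lemma sq_parity {a b : ℤ} (h : a ^ 2 ≡ b ^ 2 [ZMOD 2]) : a ≡ b [ZMOD 2] := by
  have ha : a ^ 2 ≡ a [ZMOD 2] := by
    have : (2:ℤ) ∣ a - a ^ 2 := by
      obtain ⟨k, hk⟩ := Int.even_mul_succ_self (a - 1)
      exact ⟨-k, by nlinarith⟩
    exact Int.modEq_iff_dvd.mpr this
  have hb : b ^ 2 ≡ b [ZMOD 2] := by
    have : (2:ℤ) ∣ b - b ^ 2 := by
      obtain ⟨k, hk⟩ := Int.even_mul_succ_self (b - 1)
      exact ⟨-k, by nlinarith⟩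
    exact Int.modEq_iff_dvd.mpr this
  exact ha.symm.trans (h.trans hb)

private lemma cancel_aux {p ε a b c d : ℤ} (hp : Prime p) (hε : ε * ε = 1)
    (ha : ¬ p ∣ a) (h1 : c ≡ ε * a [ZMOD p]) (h2 : a * b ≡ c * d [ZMOD p]) :
    d ≡ ε * b [ZMOD p] := by
  have h3 : a * b ≡ ε * a * d [ZMOD p] := h2.trans (h1.mul_right d)
  have h4 : p ∣ a * (ε * d - b) := by
    have := Int.ModEq.dvd h3
    have e : ε * a * d - a * b = a * (ε * d - b) := by ring
    rwa [e] at this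
  have h5 : p ∣ ε * d - b := (hp.dvd_mul.mp h4).resolve_left ha
  have h6 : b ≡ ε * d [ZMOD p] := Int.modEq_iff_dvd.mpr h5
  calc d = ε * (ε * d) := by rw [← mul_assoc, hε, one_mul]
    _ ≡ ε * b [ZMOD p] := (h6.symm.mul_left ε)

/-- Let `p` be an odd prime, `g ≥ 1`, and `μ, r ∈ ℤ^g`. If `μ_i² ≡ r_i² (mod 4p)` for all `i`
and `μ_i μ_j ≡ r_i r_j (mod 2p)` for all `i ≠ j` (i.e. `μμᵗ − rrᵗ ∈ 4p·(half-integral matrices)`),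
then `r ≡ μ (mod 2p)` componentwise, or `r ≡ −μ (mod 2p)` componentwise. -/
theorem vec_congruent_of_outer_products_congruent
    (p : ℕ) (hp : p.Prime) (hpodd : Odd p)
    (g : ℕ) (hg : 1 ≤ g) (μ r : Fin g → ℤ)
    (hdiag : ∀ i, μ i ^ 2 ≡ r i ^ 2 [ZMOD (4 * (p : ℤ))])
    (hoff : ∀ i j, i ≠ j → μ i * μ j ≡ r i * r j [ZMOD (2 * (p : ℤ))]) :
    (∀ i, r i ≡ μ i [ZMOD (2 * (p : ℤ))]) ∨ (∀ i, r i ≡ -μ i [ZMOD (2 * (p : ℤ))]) := by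
  have hpZ : Prime (p : ℤ) := Nat.prime_iff_prime_int.mp hp
  have hcop : (2:ℤ).natAbs.Coprime ((p:ℤ)).natAbs := by
    simpa using hpodd.coprime_two_left
  have h2 : ∀ i, r i ≡ μ i [ZMOD 2] := by
    intro i
    have h := (hdiag i).of_dvd (show (2:ℤ) ∣ 4 * (p:ℤ) from ⟨2 * p, by ring⟩)
    exact sq_parity h.symm
  have hpd : ∀ i, ((p:ℤ) ∣ μ i - r i) ∨ ((p:ℤ) ∣ μ i + r i) := by
    intro i
    have h := (hdiag i).of_dvd (show (p:ℤ) ∣ 4 * (p:ℤ) from ⟨4, by ring⟩)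
    have hd : (p:ℤ) ∣ (μ i - r i) * (μ i + r i) := by
      have h' := h.dvd
      have e : r i ^ 2 - μ i ^ 2 = -((μ i - r i) * (μ i + r i)) := by ring
      rw [e] at h'
      exact dvd_neg.mp h'
    exact hpZ.dvd_mul.mp hd
  have combine : ∀ (a b : ℤ), a ≡ b [ZMOD 2] → a ≡ b [ZMOD (p:ℤ)] →
      a ≡ b [ZMOD (2 * (p:ℤ))] :=
    fun a b h1 h2 => (Int.modEq_and_modEq_iff_modEq_mul hcop).mp ⟨h1, h2⟩
  by_cases hall : ∀ i, (p:ℤ) ∣ μ i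
  · left
    intro i
    refine combine _ _ (h2 i) ?_
    have hmu := hall i
    have hr : (p:ℤ) ∣ r i := by
      rcases hpd i with h | h
      · have := dvd_sub hmu h; simpa using this
      · have := dvd_sub h hmu; simpa using this
    exact Int.modEq_iff_dvd.mpr (dvd_sub hmu hr)
  · push_neg at hall
    obtain ⟨i₀, hi₀⟩ := hall
    have key : ∀ ε : ℤ, ε * ε = 1 → (r i₀ ≡ ε * μ i₀ [ZMOD (p:ℤ)]) →
        ∀ i, r i ≡ ε * μ i [ZMOD (2 * (p:ℤ))] := by
      intro ε hε h0 i
      have h2' : r i ≡ ε * μ i [ZMOD 2] := by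
        have hu : ε = 1 ∨ ε = -1 := Int.isUnit_iff.mp (IsUnit.of_mul_eq_one (a := ε) ε hε)
        rcases hu with rfl | rfl
        · simpa using h2 i
        · have : μ i ≡ -1 * μ i [ZMOD 2] := Int.modEq_iff_dvd.mpr ⟨-(μ i), by ring⟩
          exact (h2 i).trans this
      refine combine _ _ h2' ?_
      by_cases hii : i = i₀
      · subst hii; exact h0
      · have hoffp := (hoff i₀ i (fun h => hii h.symm)).of_dvd
          (show (p:ℤ) ∣ 2 * (p:ℤ) from ⟨2, by ring⟩)
        exact cancel_aux hpZ hε hi₀ h0 hoffp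
    rcases hpd i₀ with h | h
    · left
      have hk := key 1 (by ring) (by rw [one_mul]; exact Int.modEq_iff_dvd.mpr h)
      intro i; simpa using hk i
    · right
      have hk := key (-1) (by ring) (Int.modEq_iff_dvd.mpr (by
        rw [show (-1) * μ i₀ - r i₀ = -(μ i₀ + r i₀) by ring]; exact dvd_neg.mpr h))
      intro i; simpa [neg_mul, one_mul] using hk i
end
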